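/- Let B be drawn from LRR(n, 2). There exists a sequence ε_n → 0 such that for every n and every k > n/3, E[|N(G_k)|] ≤ (1 + ε_n) · (n/3 + k). -/

import Mathlib

open Finset

/-- One step of the greedy algorithm on the bipartite graph whose left nodes are
`Fin n`, right nodes are `Fin m`, and whose neighborhoods are given by `N`.
It adds to the current solution `S` the left node with largest marginal
coverage `|N(u) \ N(S)|`, breaking ties by smallest index. -/
noncomputable def greedyStep {n m : ℕ} (N : Fin n → Finset (Fin m))
    (S : Finset (Fin n)) : Finset (Fin n) :=
  if h : (Finset.univ \ S).Nonempty then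
    insert
      (((Finset.univ \ S).filter fun u =>
          ((N u) \ S.biUnion N).card =
            (Finset.univ \ S).sup fun v => ((N v) \ S.biUnion N).card).min'
        (by
          obtain ⟨u, hu, hsup⟩ :=
            Finset.exists_mem_eq_sup (Finset.univ \ S) h
              (fun v => ((N v) \ S.biUnion N).card)
          exact ⟨u, Finset.mem_filter.mpr ⟨hu, hsup.symm⟩⟩))
      S
  else S

/-- The greedy solution after `k` iterations (`greedy N 0 = ∅`). -/
noncomputable def greedy {n m : ℕ} (N : Fin n → Finset (Fin m)) : ℕ → Finset (Fin n)
  | 0 => ∅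
  | k + 1 => greedyStep N (greedy N k)

/-- The coverage `|N(O_k)|` of an optimal solution with cardinality constraint `k`. -/
def optValue {n m : ℕ} (N : Fin n → Finset (Fin m)) (k : ℕ) : ℕ :=
  (Finset.univ.powerset.filter fun S : Finset (Fin n) => S.card ≤ k).sup
    fun S => (S.biUnion N).card

/-- The sample space of the left-regular random model `LRR(n, d)`: all
neighborhood maps in which every left node has exactly `d` of the `n` right
nodes as neighbors. -/
def lrrGraphs (n d : ℕ) : Finset (Fin n → Finset (Fin n)) :=
  Finset.univ.filter fun N => ∀ i, (N i).card = d

/-- Expectation of `f` under the left-regular random model `LRR(n, d)`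
(uniform distribution on `lrrGraphs n d`). -/
noncomputable def lrrExp (n d : ℕ) (f : (Fin n → Finset (Fin n)) → ℝ) : ℝ :=
  (∑ N ∈ lrrGraphs n d, f N) / (lrrGraphs n d).card

open scoped Classical in
/-- Probability of the event `p` under the left-regular random model `LRR(n, d)`. -/
noncomputable def lrrProb (n d : ℕ) (p : (Fin n → Finset (Fin n)) → Prop) : ℝ :=
  ((lrrGraphs n d).filter p).card / (lrrGraphs n d).card

/-!
When every left degree is 2, greedy first takes, in index order, each node whose two neighbours
are both still uncovered; by the smallest-index tie-breaking these are exactly the nodes of the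
first-fit family `A = firstFit N n` of pairwise disjoint neighbourhoods, and afterwards every step
gains at most one right node. Hence `|N(G_k)| ≤ k + |A| = k + (n - F) / 2`, `F = |uncovered N n|`.

Under `LRR(n, 2)` the neighbourhoods are independent uniform pairs, so each scanned node offers a
fresh uniform pair to the current set of free right nodes, which raises the expectation of
`1 / (#free + 1)` by at most `1 / C(n, 2)`. Thus
`E[1 / (F + 1)] ≤ 1/(n + 1) + 2/(n - 1) ≤ 3/(n - 1)`, Cauchy–Schwarz gives
`E[F + 1] ≥ (n - 1) / 3`, and so `E|N(G_k)| ≤ k + n/3 + 1 ≤ (1 + 3/(n + 1)) (n/3 + k)`, as `k ≥ 1`.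
-/

open Function
open scoped BigOperators

section Greedy

variable {n m : ℕ} (N : Fin n → Finset (Fin m))

/-- `max_{v ∉ S} |N(v) \ N(S)|`, which is `0` when `S` is everything. -/
def maxGain (S : Finset (Fin n)) : ℕ :=
  (univ \ S).sup fun v => (N v \ S.biUnion N).card

lemma exists_greedyStep_eq_insert {S : Finset (Fin n)} (h : (univ \ S).Nonempty) :
    ∃ u ∉ S, greedyStep N S = insert u S ∧ (N u \ S.biUnion N).card = maxGain N S ∧
      ∀ w ∉ S, (N w \ S.biUnion N).card = maxGain N S → u ≤ w := by
  rw [greedyStep, dif_pos h]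
  generalize_proofs hT
  have hmin := min'_mem _ hT
  refine ⟨_, (mem_sdiff.1 (mem_filter.1 hmin).1).2, rfl, (mem_filter.1 hmin).2,
    fun w hw hgain => min'_le _ w (mem_filter.2 ⟨mem_sdiff.2 ⟨mem_univ w, hw⟩, hgain⟩)⟩

lemma card_biUnion_greedyStep (S : Finset (Fin n)) :
    ((greedyStep N S).biUnion N).card = (S.biUnion N).card + maxGain N S := by
  by_cases h : (univ \ S).Nonempty
  · obtain ⟨u, -, hstep, hgain, -⟩ := exists_greedyStep_eq_insert N h
    rw [hstep, biUnion_insert, ← card_sdiff_add_card, hgain, add_comm]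
  · rw [greedyStep, dif_neg h, maxGain, not_nonempty_iff_eq_empty.1 h, sup_empty]
    rfl

lemma subset_greedyStep (S : Finset (Fin n)) : S ⊆ greedyStep N S := by
  unfold greedyStep
  split_ifs
  exacts [subset_insert _ _, subset_rfl]

lemma greedy_mono : Monotone (greedy N) :=
  monotone_nat_of_le_succ fun k => subset_greedyStep N (greedy N k)

end Greedy

section FirstFit

variable {n m : ℕ} (N : Fin n → Finset (Fin m))

/-- Scan the left nodes `0, 1, …, i - 1` in order and keep a node when its neighbourhood is
disjoint from those of the nodes kept so far (a first-fit matching when all degrees are 2). -/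
def firstFit : ℕ → Finset (Fin n)
  | 0 => ∅
  | i + 1 =>
    if h : ∃ hi : i < n, Disjoint (N ⟨i, hi⟩) ((firstFit i).biUnion N) then
      insert ⟨i, h.1⟩ (firstFit i)
    else firstFit i

variable {N}

lemma firstFit_succ_of_disjoint {i : ℕ} (hi : i < n)
    (h : Disjoint (N ⟨i, hi⟩) ((firstFit N i).biUnion N)) :
    firstFit N (i + 1) = insert ⟨i, hi⟩ (firstFit N i) := by
  rw [firstFit, dif_pos ⟨hi, h⟩]

lemma firstFit_succ_of_not_disjoint {i : ℕ} (hi : i < n)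
    (h : ¬Disjoint (N ⟨i, hi⟩) ((firstFit N i).biUnion N)) :
    firstFit N (i + 1) = firstFit N i := by
  rw [firstFit, dif_neg fun ⟨_, h'⟩ => h h']

variable (N) in
lemma firstFit_mono : Monotone (firstFit N) := by
  refine monotone_nat_of_le_succ fun i => ?_
  show firstFit N i ⊆ _
  conv_rhs => rw [firstFit]
  split_ifs
  exacts [subset_insert _ _, subset_rfl]

lemma lt_of_mem_firstFit {i : ℕ} {u : Fin n} (hu : u ∈ firstFit N i) : (u : ℕ) < i := by
  induction i with
  | zero => simp [firstFit] at hu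
  | succ i ih =>
    unfold firstFit at hu
    split_ifs at hu
    · rcases mem_insert.1 hu with rfl | hu
      exacts [Nat.lt_succ_self i, (ih hu).trans (Nat.lt_succ_self i)]
    · exact (ih hu).trans (Nat.lt_succ_self i)

lemma not_disjoint_of_notMem_firstFit {i : ℕ} {u : Fin n} (hu : (u : ℕ) < i)
    (hA : u ∉ firstFit N i) : ¬Disjoint (N u) ((firstFit N i).biUnion N) := by
  have hrejected : ¬Disjoint (N u) ((firstFit N u).biUnion N) := fun h => by
    refine hA (firstFit_mono N hu ?_)
    rw [firstFit_succ_of_disjoint u.isLt h]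
    exact mem_insert_self _ _
  exact fun h => hrejected (h.mono_right (biUnion_subset_biUnion_of_subset_left _
    (firstFit_mono N hu.le)))

lemma firstFit_congr {N' : Fin n → Finset (Fin m)} {i : ℕ}
    (h : ∀ u : Fin n, (u : ℕ) < i → N u = N' u) : firstFit N i = firstFit N' i := by
  induction i with
  | zero => rfl
  | succ i ih =>
    have hA := ih fun u hu => h u (hu.trans (Nat.lt_succ_self i))
    have hcov : (firstFit N' i).biUnion N = (firstFit N' i).biUnion N' :=
      biUnion_congr rfl fun u hu => h u ((lt_of_mem_firstFit hu).trans (Nat.lt_succ_self i))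
    have hlast : ∀ hi : i < n, N ⟨i, hi⟩ = N' ⟨i, hi⟩ := fun hi => h _ (Nat.lt_succ_self i)
    simp only [firstFit, hA, hcov, hlast]

end FirstFit

lemma card_sdiff_le_one_of_not_disjoint {α : Type*} [DecidableEq α] {s t : Finset α}
    (hs : s.card = 2) (h : ¬Disjoint s t) : (s \ t).card ≤ 1 := by
  obtain ⟨x, hx⟩ := not_disjoint_iff_nonempty_inter.1 h
  have : 0 < (t ∩ s).card := card_pos.2 ⟨x, by rwa [inter_comm]⟩
  rw [card_sdiff, hs]
  omega

section DegreeTwo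

variable {n m : ℕ} {N : Fin n → Finset (Fin m)}

lemma card_biUnion_firstFit (h2 : ∀ u, (N u).card = 2) (i : ℕ) :
    ((firstFit N i).biUnion N).card = 2 * (firstFit N i).card := by
  induction i with
  | zero => simp [firstFit]
  | succ i ih =>
    by_cases hi : i < n
    · by_cases hdisj : Disjoint (N ⟨i, hi⟩) ((firstFit N i).biUnion N)
      · have hnew : (⟨i, hi⟩ : Fin n) ∉ firstFit N i := fun h => (lt_of_mem_firstFit h).false
        rw [firstFit_succ_of_disjoint hi hdisj, biUnion_insert, card_union_of_disjoint hdisj,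
          card_insert_of_notMem hnew, h2, ih]
        ring
      · rwa [firstFit_succ_of_not_disjoint hi hdisj]
    · rwa [firstFit, dif_neg fun ⟨hi', _⟩ => hi hi']

lemma maxGain_le_two (h2 : ∀ u, (N u).card = 2) (S : Finset (Fin n)) : maxGain N S ≤ 2 :=
  Finset.sup_le fun v _ => (card_le_card sdiff_subset).trans (h2 v).le

lemma maxGain_le_one (h2 : ∀ u, (N u).card = 2) {S : Finset (Fin n)} (hS : firstFit N n ⊆ S) :
    maxGain N S ≤ 1 := by
  refine Finset.sup_le fun v hv => card_sdiff_le_one_of_not_disjoint (h2 v) fun hdisj => ?_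
  refine not_disjoint_of_notMem_firstFit v.isLt (fun hA => (mem_sdiff.1 hv).2 (hS hA)) ?_
  exact hdisj.mono_right (biUnion_subset_biUnion_of_subset_left _ hS)

/-- Nodes before `i` that `firstFit` rejected gain at most 1, so smallest-index tie-breaking
among the gain-2 nodes picks node `i`. -/
lemma greedyStep_firstFit (h2 : ∀ u, (N u).card = 2) {i : ℕ} (hi : i < n)
    (hdisj : Disjoint (N ⟨i, hi⟩) ((firstFit N i).biUnion N)) :
    greedyStep N (firstFit N i) = insert ⟨i, hi⟩ (firstFit N i) := by
  have hnew : (⟨i, hi⟩ : Fin n) ∉ firstFit N i := fun h => (lt_of_mem_firstFit h).false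
  have hgain_i : (N ⟨i, hi⟩ \ (firstFit N i).biUnion N).card = 2 := by
    rw [Finset.sdiff_eq_self_iff_disjoint.2 hdisj, h2]
  have hmax : maxGain N (firstFit N i) = 2 :=
    (maxGain_le_two h2 _).antisymm (hgain_i ▸ le_sup (f := fun v => (N v \ _).card)
      (mem_sdiff.2 ⟨mem_univ _, hnew⟩))
  obtain ⟨u, hu, hstep, hgain_u, hmin⟩ :=
    exists_greedyStep_eq_insert N ⟨_, mem_sdiff.2 ⟨mem_univ _, hnew⟩⟩
  have hui : u ≤ ⟨i, hi⟩ := hmin _ hnew (hgain_i.trans hmax.symm)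
  have hiu : ¬u < ⟨i, hi⟩ := fun hlt => by
    have hlt' : (u : ℕ) < i := hlt
    have := card_sdiff_le_one_of_not_disjoint (h2 u) (not_disjoint_of_notMem_firstFit hlt' hu)
    omega
  rw [hstep, le_antisymm hui (not_lt.1 hiu)]

lemma greedy_card_firstFit (h2 : ∀ u, (N u).card = 2) {i : ℕ} (hi : i ≤ n) :
    greedy N (firstFit N i).card = firstFit N i := by
  induction i with
  | zero => rfl
  | succ i ih =>
    have hi' : i < n := hi
    by_cases hdisj : Disjoint (N ⟨i, hi'⟩) ((firstFit N i).biUnion N)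
    · have hnew : (⟨i, hi'⟩ : Fin n) ∉ firstFit N i := fun h => (lt_of_mem_firstFit h).false
      rw [firstFit_succ_of_disjoint hi' hdisj, card_insert_of_notMem hnew, greedy, ih hi'.le,
        greedyStep_firstFit h2 hi' hdisj]
    · rw [firstFit_succ_of_not_disjoint hi' hdisj, ih hi'.le]

lemma card_biUnion_greedy_le (h2 : ∀ u, (N u).card = 2) (k : ℕ) :
    ((greedy N k).biUnion N).card ≤ k + (firstFit N n).card := by
  suffices h : ∀ k, ((greedy N k).biUnion N).card ≤ k + min k (firstFit N n).card from
    (h k).trans (by omega)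
  intro k
  induction k with
  | zero => simp [greedy]
  | succ k ih =>
    rw [greedy, card_biUnion_greedyStep]
    by_cases hk : k < (firstFit N n).card
    · have := maxGain_le_two h2 (greedy N k)
      omega
    · have hA : firstFit N n ⊆ greedy N k := by
        rw [← greedy_card_firstFit h2 le_rfl]
        exact greedy_mono N (not_lt.1 hk)
      have := maxGain_le_one h2 hA
      omega

end DegreeTwo

/-- The free right nodes after the edge `e` is offered: it is taken iff both its ends are free. -/
def sdiffIfSubset {α : Type*} [DecidableEq α] (f e : Finset α) : Finset α :=
  if e ⊆ f then f \ e else f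

lemma choose_two_mul_inv_sub_inv_le_one (x : ℕ) :
    (x.choose 2 : ℝ) * ((((x - 2 : ℕ) : ℝ) + 1)⁻¹ - ((x : ℝ) + 1)⁻¹) ≤ 1 := by
  rcases lt_or_ge x 2 with hx | hx
  · simp [Nat.choose_eq_zero_of_lt hx]
  · have hx' : (2 : ℝ) ≤ x := by exact_mod_cast hx
    rw [Nat.cast_sub hx, Nat.cast_choose_two, Nat.cast_ofNat]
    have h1 : (0 : ℝ) < x - 2 + 1 := by linarith
    rw [inv_sub_inv h1.ne' (by positivity), mul_div_assoc', div_le_one (by positivity)]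
    nlinarith

/-- Only the `C(|f|, 2)` pairs inside `f` change the summand, each by
`1/(|f| - 1) - 1/(|f| + 1)`. -/
lemma sum_inv_card_sdiffIfSubset_le {α : Type*} [Fintype α] [DecidableEq α] (f : Finset α) :
    ∑ e ∈ powersetCard 2 (univ : Finset α), (((sdiffIfSubset f e).card : ℝ) + 1)⁻¹ ≤
      (powersetCard 2 (univ : Finset α)).card * ((f.card : ℝ) + 1)⁻¹ + 1 := by
  have hterm : ∀ e ∈ powersetCard 2 (univ : Finset α),
      (((sdiffIfSubset f e).card : ℝ) + 1)⁻¹ = ((f.card : ℝ) + 1)⁻¹ +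
        if e ∈ powersetCard 2 f then (((f.card - 2 : ℕ) : ℝ) + 1)⁻¹ - ((f.card : ℝ) + 1)⁻¹
        else 0 := by
    intro e he
    rw [mem_powersetCard_univ] at he
    by_cases hef : e ⊆ f
    · rw [sdiffIfSubset, if_pos hef, if_pos (mem_powersetCard.2 ⟨hef, he⟩),
        card_sdiff_of_subset hef, he]
      ring
    · rw [sdiffIfSubset, if_neg hef, if_neg fun h => hef (mem_powersetCard.1 h).1, add_zero]
  rw [sum_congr rfl hterm, sum_add_distrib, sum_const, nsmul_eq_mul, sum_ite_mem,
    inter_eq_right.2 (powersetCard_mono (subset_univ f)), sum_const, card_powersetCard 2 f,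
    nsmul_eq_mul]
  linarith [choose_two_mul_inv_sub_inv_le_one f.card]

lemma expect_inv_card_sdiffIfSubset_le {α : Type*} [Fintype α] [DecidableEq α]
    (f : Finset α) :
    𝔼 e ∈ powersetCard 2 (univ : Finset α), (((sdiffIfSubset f e).card : ℝ) + 1)⁻¹ ≤
      ((f.card : ℝ) + 1)⁻¹ + ((powersetCard 2 (univ : Finset α)).card : ℝ)⁻¹ := by
  rcases (powersetCard 2 (univ : Finset α)).eq_empty_or_nonempty with hP | hP
  · rw [hP, expect_empty]
    positivity
  · have hcard : (0 : ℝ) < (powersetCard 2 (univ : Finset α)).card := by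
      exact_mod_cast hP.card_pos
    rw [expect_eq_sum_div_card, div_le_iff₀ hcard, add_mul, inv_mul_cancel₀ hcard.ne', mul_comm]
    exact sum_inv_card_sdiffIfSubset_le f

lemma expect_expect_update_piFinset {ι α M : Type*} [Fintype ι] [DecidableEq ι]
    [AddCommMonoid M] [Module ℚ≥0 M] (s : ι → Finset α) (j : ι) (φ : (ι → α) → M) :
    𝔼 x ∈ Fintype.piFinset s, 𝔼 e ∈ s j, φ (update x j e) = 𝔼 x ∈ Fintype.piFinset s, φ x := by
  rcases (s j).eq_empty_or_nonempty with hj | hj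
  · simp [Fintype.piFinset_eq_empty.2 ⟨j, hj⟩]
  have hswap : ∀ p ∈ Fintype.piFinset s ×ˢ s j,
      (update p.1 j p.2, p.1 j) ∈ Fintype.piFinset s ×ˢ s j :=
    fun p hp => by
      obtain ⟨hx, he⟩ := mem_product.1 hp
      refine mem_product.2 ⟨Fintype.mem_piFinset.2 fun i => ?_, Fintype.mem_piFinset.1 hx j⟩
      show update p.1 j p.2 i ∈ s i
      rcases eq_or_ne i j with rfl | hij
      · rwa [update_self]
      · rw [update_of_ne hij]
        exact Fintype.mem_piFinset.1 hx i
  calc 𝔼 x ∈ Fintype.piFinset s, 𝔼 e ∈ s j, φ (update x j e)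
      = 𝔼 p ∈ Fintype.piFinset s ×ˢ s j, φ (update p.1 j p.2) := (expect_product' _ _ _).symm
    _ = 𝔼 p ∈ Fintype.piFinset s ×ˢ s j, φ p.1 :=
        expect_nbij' (fun p => (update p.1 j p.2, p.1 j)) (fun p => (update p.1 j p.2, p.1 j))
          hswap hswap (fun p _ => by simp) (fun p _ => by simp) (fun p _ => rfl)
    _ = 𝔼 x ∈ Fintype.piFinset s, 𝔼 _e ∈ s j, φ x := expect_product' _ _ fun x _ => φ x
    _ = 𝔼 x ∈ Fintype.piFinset s, φ x := expect_congr rfl fun x _ => expect_const hj _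

section Uncovered

variable {n m : ℕ}

def uncovered (N : Fin n → Finset (Fin m)) (i : ℕ) : Finset (Fin m) :=
  univ \ (firstFit N i).biUnion N

lemma uncovered_congr {N N' : Fin n → Finset (Fin m)} {i : ℕ}
    (h : ∀ u : Fin n, (u : ℕ) < i → N u = N' u) : uncovered N i = uncovered N' i := by
  rw [uncovered, uncovered, firstFit_congr h]
  exact congrArg _ (biUnion_congr rfl fun u hu => h u (lt_of_mem_firstFit hu))

lemma uncovered_succ (N : Fin n → Finset (Fin m)) {i : ℕ} (hi : i < n) :
    uncovered N (i + 1) = sdiffIfSubset (uncovered N i) (N ⟨i, hi⟩) := by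
  unfold uncovered sdiffIfSubset
  by_cases hdisj : Disjoint (N ⟨i, hi⟩) ((firstFit N i).biUnion N)
  · rw [if_pos (subset_sdiff.2 ⟨subset_univ _, hdisj⟩), firstFit_succ_of_disjoint hi hdisj,
      biUnion_insert, _root_.sdiff_sdiff_left, sup_eq_union, union_comm]
  · rw [if_neg fun h => hdisj (subset_sdiff.1 h).2, firstFit_succ_of_not_disjoint hi hdisj]

lemma card_uncovered_add_two_mul_card_firstFit {N : Fin n → Finset (Fin m)}
    (h2 : ∀ u, (N u).card = 2) (i : ℕ) :
    (uncovered N i).card + 2 * (firstFit N i).card = m := by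
  rw [uncovered, card_sdiff_of_subset (subset_univ _), card_univ, Fintype.card_fin,
    ← card_biUnion_firstFit h2]
  have : ((firstFit N i).biUnion N).card ≤ m := card_le_univ _ |>.trans_eq (Fintype.card_fin m)
  omega

lemma expect_inv_card_uncovered_le {i : ℕ} (hi : i ≤ n) :
    𝔼 N ∈ Fintype.piFinset fun _ : Fin n => powersetCard 2 (univ : Finset (Fin m)),
        (((uncovered N i).card : ℝ) + 1)⁻¹ ≤
      ((m : ℝ) + 1)⁻¹ + i / (powersetCard 2 (univ : Finset (Fin m))).card := by
  set P := powersetCard 2 (univ : Finset (Fin m))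
  rcases (Fintype.piFinset fun _ : Fin n => P).eq_empty_or_nonempty with hL | hL
  · rw [hL, expect_empty]
    positivity
  induction i with
  | zero => simp [uncovered, firstFit, expect_const hL]
  | succ i ih =>
    have hi' : i < n := hi
    calc 𝔼 N ∈ Fintype.piFinset fun _ => P, (((uncovered N (i + 1)).card : ℝ) + 1)⁻¹
        = 𝔼 N ∈ Fintype.piFinset fun _ => P, 𝔼 e ∈ P,
            (((uncovered (update N ⟨i, hi'⟩ e) (i + 1)).card : ℝ) + 1)⁻¹ :=
          (expect_expect_update_piFinset _ _ _).symm
      _ = 𝔼 N ∈ Fintype.piFinset fun _ => P, 𝔼 e ∈ P,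
            (((sdiffIfSubset (uncovered N i) e).card : ℝ) + 1)⁻¹ := by
          refine expect_congr rfl fun N _ => expect_congr rfl fun e _ => ?_
          rw [uncovered_succ _ hi', update_self, uncovered_congr (N' := N) (i := i) fun u hu =>
            update_of_ne (fun h => hu.ne (congrArg Fin.val h)) _ _]
      _ ≤ 𝔼 N ∈ Fintype.piFinset fun _ => P,
            ((((uncovered N i).card : ℝ) + 1)⁻¹ + (P.card : ℝ)⁻¹) :=
          expect_le_expect fun N _ => expect_inv_card_sdiffIfSubset_le _
      _ ≤ ((m : ℝ) + 1)⁻¹ + (i + 1 : ℕ) / P.card := by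
          rw [expect_add_distrib, expect_const hL, Nat.cast_succ, add_div, ← one_div]
          linarith [ih hi'.le]

end Uncovered

lemma one_le_expect_mul_expect_inv {ι : Type*} {s : Finset ι} (hs : s.Nonempty) {X : ι → ℝ}
    (hX : ∀ i ∈ s, 0 < X i) : 1 ≤ (𝔼 i ∈ s, X i) * 𝔼 i ∈ s, (X i)⁻¹ := by
  have hcs : (∑ _i ∈ s, (1 : ℝ)) ^ 2 ≤ (∑ i ∈ s, X i) * ∑ i ∈ s, (X i)⁻¹ :=
    sum_sq_le_sum_mul_sum_of_sq_le_mul s (fun i hi => (hX i hi).le)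
      (fun i hi => (inv_pos.2 (hX i hi)).le)
      (fun i hi => by rw [one_pow, mul_inv_cancel₀ (hX i hi).ne'])
  have hcard : (0 : ℝ) < s.card := by exact_mod_cast hs.card_pos
  rw [sum_const, nsmul_eq_mul, mul_one] at hcs
  rw [expect_eq_sum_div_card, expect_eq_sum_div_card, div_mul_div_comm, one_le_div (by positivity)]
  linarith

lemma le_expect_card_uncovered {n : ℕ} (hn : 2 ≤ n) :
    ((n : ℝ) - 4) / 3 ≤
      𝔼 N ∈ Fintype.piFinset fun _ : Fin n => powersetCard 2 (univ : Finset (Fin n)),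
        ((uncovered N n).card : ℝ) := by
  set L := Fintype.piFinset fun _ : Fin n => powersetCard 2 (univ : Finset (Fin n))
  have hP : (powersetCard 2 (univ : Finset (Fin n))).Nonempty :=
    powersetCard_nonempty.2 (by simpa using hn)
  have hL : L.Nonempty := Fintype.piFinset_nonempty.2 fun _ => hP
  have hn' : (2 : ℝ) ≤ n := by exact_mod_cast hn
  have hpairs : (n : ℝ) / (powersetCard 2 (univ : Finset (Fin n))).card = 2 / ((n : ℝ) - 1) := by
    rw [card_powersetCard, card_univ, Fintype.card_fin, Nat.cast_choose_two]
    field_simp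
  have hinv : 𝔼 N ∈ L, (((uncovered N n).card : ℝ) + 1)⁻¹ ≤ 3 / ((n : ℝ) - 1) := by
    refine (expect_inv_card_uncovered_le le_rfl).trans ?_
    have : ((n : ℝ) + 1)⁻¹ ≤ ((n : ℝ) - 1)⁻¹ := inv_anti₀ (by linarith) (by linarith)
    rw [hpairs, div_eq_mul_inv, div_eq_mul_inv]
    linarith
  have hjensen := one_le_expect_mul_expect_inv hL
    (X := fun N => ((uncovered N n).card : ℝ) + 1) fun N _ => by positivity
  rw [expect_add_distrib, expect_const hL] at hjensen
  set a := 𝔼 N ∈ L, ((uncovered N n).card : ℝ)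
  have ha : 0 ≤ a := expect_nonneg fun N _ => by positivity
  have h3 : 1 ≤ (a + 1) * (3 / ((n : ℝ) - 1)) :=
    hjensen.trans (mul_le_mul_of_nonneg_left hinv (by linarith))
  rw [mul_div_assoc', le_div_iff₀ (by linarith)] at h3
  linarith

lemma card_biUnion_greedy_le_card_uncovered {n m : ℕ} {N : Fin n → Finset (Fin m)}
    (h2 : ∀ u, (N u).card = 2) (k : ℕ) :
    (((greedy N k).biUnion N).card : ℝ) ≤ k + ((m : ℝ) - (uncovered N n).card) / 2 := by
  have hgreedy : (((greedy N k).biUnion N).card : ℝ) ≤ k + (firstFit N n).card := by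
    exact_mod_cast card_biUnion_greedy_le h2 k
  have hsplit : ((uncovered N n).card : ℝ) + 2 * (firstFit N n).card = m := by
    exact_mod_cast card_uncovered_add_two_mul_card_firstFit h2 n
  linarith

lemma lrrGraphs_eq_piFinset (n d : ℕ) :
    lrrGraphs n d = Fintype.piFinset fun _ : Fin n => powersetCard d (univ : Finset (Fin n)) := by
  ext N
  simp [lrrGraphs]

lemma lrrExp_card_biUnion_greedy_le (n k : ℕ) :
    lrrExp n 2 (fun N => (((greedy N k).biUnion N).card : ℝ)) ≤ k + (n : ℝ) / 3 + 1 := by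
  rw [lrrExp, ← expect_eq_sum_div_card]
  rcases (lrrGraphs n 2).eq_empty_or_nonempty with hL | hL
  · rw [hL, expect_empty]
    positivity
  have hdeg : ∀ N ∈ lrrGraphs n 2, ∀ u, (N u).card = 2 := fun N hN => (mem_filter.1 hN).2
  rcases lt_or_ge n 2 with hn | hn
  · refine expect_le hL fun N _ => ?_
    have hcov : ((greedy N k).biUnion N).card ≤ n := card_le_univ _ |>.trans_eq (Fintype.card_fin n)
    have : (((greedy N k).biUnion N).card : ℝ) ≤ 1 := by exact_mod_cast hcov.trans (by omega)
    linarith [k.cast_nonneg (α := ℝ), n.cast_nonneg (α := ℝ)]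
  · calc 𝔼 N ∈ lrrGraphs n 2, (((greedy N k).biUnion N).card : ℝ)
        ≤ 𝔼 N ∈ lrrGraphs n 2, ((k : ℝ) + ((n : ℝ) - (uncovered N n).card) / 2) :=
          expect_le_expect fun N hN => card_biUnion_greedy_le_card_uncovered (hdeg N hN) k
      _ = k + ((n : ℝ) - 𝔼 N ∈ lrrGraphs n 2, ((uncovered N n).card : ℝ)) / 2 := by
          rw [expect_add_distrib, ← expect_div, expect_sub_distrib, expect_const hL,
            expect_const hL]
      _ ≤ k + (n : ℝ) / 3 + 1 := by
          linarith [lrrGraphs_eq_piFinset n 2 ▸ le_expect_card_uncovered hn]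

/-- **Lemma 4.3 (upper bound for Greedy, `d = 2`).** Under `LRR(n, 2)`, there
is a sequence `ε_n → 0` such that for every `n` and every `k > n/3`,
`E[|N(G_k)|] ≤ (1 + ε_n)·(n/3 + k)`. -/
theorem greedy_upper_bound_degree_two :
    ∃ ε : ℕ → ℝ, Filter.Tendsto ε Filter.atTop (nhds 0) ∧
      ∀ n k : ℕ, (k : ℝ) > (n : ℝ) / 3 →
        lrrExp n 2 (fun N => (((greedy N k).biUnion N).card : ℝ)) ≤
          (1 + ε n) * ((n : ℝ) / 3 + k) := by
  refine ⟨fun n => 3 / ((n : ℝ) + 1), ?_, fun n k hk => ?_⟩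
  · simpa [div_eq_mul_inv] using tendsto_one_div_add_atTop_nhds_zero_nat.const_mul (3 : ℝ)
  · have hk1 : (1 : ℝ) ≤ k := by
      have : 0 < k := by exact_mod_cast (by positivity : (0 : ℝ) ≤ n / 3).trans_lt hk
      exact_mod_cast this
    have hslack : 1 ≤ 3 / ((n : ℝ) + 1) * ((n : ℝ) / 3 + k) := by
      rw [div_mul_eq_mul_div, one_le_div (by positivity)]
      linarith
    linarith [lrrExp_card_biUnion_greedy_le n k]
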